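/- For every globally Lipschitz concave function f : E → ℝ and every ε > 0 there exists a finite nonempty set S ⊆ ℚ^d × ℚ such that the function g(x) := min_{(a,b) ∈ S} (⟪a, x⟫ + b) satisfies |f(x) − g(x)| ≤ ε(1 + ‖x‖) for all x ∈ E. Moreover, one can choose a sequence {g_n} of such rational concave piecewise affine functions with g_n ≤ g_{n+1} pointwise converging to f in the G-norm. That is, rational concave piecewise affine functions are dense in the cone of globally Lipschitz concave functions with respect to the G-norm. -/

import Mathlib

open Set

noncomputable section

/-- `f` is globally Lipschitz. -/
def GloballyLipschitz (d : ℕ) (f : EuclideanSpace ℝ (Fin d) → ℝ) : Prop :=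
  ∃ C : ℝ, 0 ≤ C ∧ ∀ x y, |f x - f y| ≤ C * ‖x - y‖

/-- The rational point of `ℝ^d` with coordinates `q`. -/
noncomputable def ratToE (d : ℕ) (q : Fin d → ℚ) : EuclideanSpace ℝ (Fin d) :=
  (WithLp.equiv 2 (Fin d → ℝ)).symm fun i => (q i : ℝ)

/-- `g` is a rational concave piecewise affine function:
`g(x) = min_{(a,b) ∈ S} (⟪a, x⟫ + b)` for a finite nonempty set `S ⊆ ℚ^d × ℚ`. -/
def IsRatCPA (d : ℕ) (g : EuclideanSpace ℝ (Fin d) → ℝ) : Prop :=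
  ∃ S : Finset ((Fin d → ℚ) × ℚ), ∃ hS : S.Nonempty,
    ∀ x, g x = S.inf' hS fun p => (inner ℝ (ratToE d p.1) x : ℝ) + (p.2 : ℝ)

/-!
At every point `x` a concave `C`-Lipschitz `f` admits an affine majorant that is tight at `x` up
to `τ`, and its slope lies in the ball of radius `C + τ`; finitely many rational vectors are
`η`-dense in that ball. Perturbing the slope by `η` turns it into the slope of an affine majorant
of `F = f - η ‖·‖` that is tight at `x` up to `O(η (1 + ‖x‖))`. Hence the minimum, over the
finitely many rational slopes `q`, of `⟪q, ·⟫ - β q`, where `β q` is a rational lower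
approximation of the concave conjugate `⨅ z, ⟪q, z⟫ - F z`, lies between `F` and
`F + O(η (1 + ‖x‖))`.

For the monotone sequence, take approximants `h n` with error `2⁻ⁿ (1 + ‖x‖)` and subtract the
rational concave piecewise affine margin `3 · 2⁻ⁿ (‖x‖₁ + 1)`. Since `‖x‖ ≤ ‖x‖₁`, the margins
shrink faster than consecutive approximants can differ.
-/

open scoped RealInnerProductSpace

section InnerProductSpace

variable {E : Type*} [NormedAddCommGroup E] [InnerProductSpace ℝ E]

theorem ConcaveOn.exists_le_add_inner [CompleteSpace E] {f : E → ℝ}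
    (hf : ConcaveOn ℝ univ f) (hfc : Continuous f) (x : E) {τ : ℝ} (hτ : 0 < τ) :
    ∃ u : E, ∀ z, f z ≤ f x + τ + ⟪u, z - x⟫ := by
  obtain ⟨l, c, hle, hx⟩ := hf.neg.exists_affine_le_of_lt (𝕜 := ℝ) (mem_univ x)
    (a := -f x - τ) (by simpa using hτ) isClosed_univ
    (hfc.neg.lowerSemicontinuous.lowerSemicontinuousOn _)
  refine ⟨(InnerProductSpace.toDual ℝ E).symm (-l), fun z => ?_⟩
  have hz := hle ⟨z, mem_univ z⟩
  simp only [Pi.add_apply, domRestrict_apply, Function.comp_apply, RCLike.re_to_real,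
    Function.const_apply, Pi.neg_apply] at hz hx
  rw [InnerProductSpace.toDual_symm_apply, map_sub]
  simp only [neg_apply]
  linarith

theorem norm_le_of_forall_le_add_inner {f : E → ℝ} {C τ : ℝ} (hC : 0 ≤ C) (hτ : 0 ≤ τ)
    (hfL : ∀ x y, |f x - f y| ≤ C * ‖x - y‖) {x u : E}
    (hu : ∀ z, f z ≤ f x + τ + ⟪u, z - x⟫) : ‖u‖ ≤ C + τ := by
  rcases eq_or_ne u 0 with rfl | hu0
  · simpa using add_nonneg hC hτ
  have hpos : 0 < ‖u‖ := norm_pos_iff.2 hu0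
  have hdir : ⟪u, (x - ‖u‖⁻¹ • u) - x⟫ = -‖u‖ := by
    rw [sub_sub_cancel_left, inner_neg_right, real_inner_smul_right, real_inner_self_eq_norm_sq]
    field_simp
  have hlip := (le_abs_self _).trans (hfL x (x - ‖u‖⁻¹ • u))
  rw [sub_sub_cancel, norm_smul, norm_inv, norm_norm, inv_mul_cancel₀ hpos.ne', mul_one] at hlip
  linarith [hu (x - ‖u‖⁻¹ • u)]

theorem le_add_inner_of_norm_sub_le {f : E → ℝ} {x u q : E} {τ η : ℝ}
    (hu : ∀ z, f z ≤ f x + τ + ⟪u, z - x⟫) (hq : ‖q - u‖ ≤ η) (z : E) :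
    f z - η * ‖z‖ ≤ (f x - η * ‖x‖) + (τ + 2 * η * ‖x‖) + ⟪q, z - x⟫ := by
  have key : ∀ y, |⟪q - u, y⟫| ≤ η * ‖y‖ := fun y =>
    (abs_real_inner_le_norm _ _).trans (mul_le_mul_of_nonneg_right hq (norm_nonneg y))
  have h1 := abs_le.1 (key z)
  have h2 := abs_le.1 (key x)
  simp only [inner_sub_left, inner_sub_right] at h1 h2 ⊢
  have hz := hu z
  rw [inner_sub_right] at hz
  linarith

end InnerProductSpace

theorem DenseRange.exists_finset_forall_dist_lt {X ι : Type*} [PseudoMetricSpace X] {φ : ι → X}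
    (hφ : DenseRange φ) {K : Set X} (hK : IsCompact K) {η : ℝ} (hη : 0 < η) :
    ∃ t : Finset ι, ∀ u ∈ K, ∃ i ∈ t, dist (φ i) u < η := by
  obtain ⟨t, ht⟩ := hK.elim_finite_subcover (fun i => Metric.ball (φ i) η)
    (fun _ => Metric.isOpen_ball) fun u _ => by
      obtain ⟨i, hi⟩ := hφ.exists_dist_lt u hη
      exact mem_iUnion.2 ⟨i, Metric.mem_ball.2 hi⟩
  refine ⟨t, fun u hu => ?_⟩
  obtain ⟨i, hi, hui⟩ := mem_iUnion₂.1 (ht hu)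
  exact ⟨i, hi, (dist_comm _ _).trans_lt hui⟩

theorem EuclideanSpace.norm_le_sum_abs {d : ℕ} (x : EuclideanSpace ℝ (Fin d)) :
    ‖x‖ ≤ ∑ i, |x i| := by
  conv_lhs => rw [← (EuclideanSpace.basisFun (Fin d) ℝ).sum_repr x]
  refine (norm_sum_le _ _).trans (le_of_eq ?_)
  simp [norm_smul]

theorem EuclideanSpace.sum_abs_le {d : ℕ} (x : EuclideanSpace ℝ (Fin d)) :
    ∑ i, |x i| ≤ d * ‖x‖ := by
  simpa using Finset.sum_le_sum fun i (_ : i ∈ Finset.univ) => PiLp.norm_apply_le x i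

theorem Finset.inf'_add_inf' {M ι κ : Type*} [AddCommMonoid M] [LinearOrder M]
    [IsOrderedAddMonoid M] {s : Finset ι} {t : Finset κ} (hs : s.Nonempty) (ht : t.Nonempty)
    (f : ι → M) (g : κ → M) :
    s.inf' hs f + t.inf' ht g = (s ×ˢ t).inf' (hs.product ht) fun p => f p.1 + g p.2 := by
  refine le_antisymm (Finset.le_inf' _ _ fun p hp => ?_) ?_
  · obtain ⟨hp₁, hp₂⟩ := Finset.mem_product.1 hp
    exact add_le_add (Finset.inf'_le f hp₁) (Finset.inf'_le g hp₂)
  · obtain ⟨i, hi, hfi⟩ := s.exists_mem_eq_inf' hs f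
    obtain ⟨j, hj, hgj⟩ := t.exists_mem_eq_inf' ht g
    rw [hfi, hgj]
    exact Finset.inf'_le (fun p => f p.1 + g p.2) (Finset.mk_mem_product hi hj)

theorem inner_ratToE (d : ℕ) (q : Fin d → ℚ) (x : EuclideanSpace ℝ (Fin d)) :
    ⟪ratToE d q, x⟫ = ∑ i, (q i : ℝ) * x i := by
  simp [ratToE, PiLp.inner_apply, mul_comm]

theorem ratToE_add (d : ℕ) (q r : Fin d → ℚ) : ratToE d (q + r) = ratToE d q + ratToE d r := by
  ext i
  simp [ratToE]

theorem denseRange_ratToE (d : ℕ) : DenseRange (ratToE d) :=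
  (WithLp.equiv 2 (Fin d → ℝ)).symm.surjective.denseRange.comp
    (DenseRange.piMap fun _ => Rat.denseRange_cast) (PiLp.continuous_toLp 2 _)

theorem isRatCPA_const (d : ℕ) (b : ℚ) : IsRatCPA d fun _ => (b : ℝ) :=
  ⟨{(0, b)}, Finset.singleton_nonempty _, fun x => by simp [inner_ratToE]⟩

theorem IsRatCPA.add {d : ℕ} {g₁ g₂ : EuclideanSpace ℝ (Fin d) → ℝ} (h₁ : IsRatCPA d g₁)
    (h₂ : IsRatCPA d g₂) : IsRatCPA d (g₁ + g₂) := by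
  classical
  obtain ⟨S₁, hS₁, hg₁⟩ := h₁
  obtain ⟨S₂, hS₂, hg₂⟩ := h₂
  refine ⟨(S₁ ×ˢ S₂).image fun p => p.1 + p.2, (hS₁.product hS₂).image _, fun x => ?_⟩
  rw [Finset.inf'_image, Pi.add_apply, hg₁, hg₂, Finset.inf'_add_inf']
  refine Finset.inf'_congr _ rfl fun p _ => ?_
  simp only [Function.comp_apply, Prod.fst_add, Prod.snd_add, ratToE_add, inner_add_left]
  push_cast
  ring

theorem isRatCPA_sum {d : ℕ} {ι : Type*} (s : Finset ι) {g : ι → EuclideanSpace ℝ (Fin d) → ℝ}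
    (hg : ∀ i ∈ s, IsRatCPA d (g i)) : IsRatCPA d (∑ i ∈ s, g i) :=
  Finset.sum_induction g (IsRatCPA d) (fun _ _ => IsRatCPA.add)
    (by simpa [Pi.zero_def] using isRatCPA_const d 0) hg

theorem isRatCPA_neg_mul_abs_apply (d : ℕ) {δ : ℚ} (hδ : 0 ≤ δ) (i : Fin d) :
    IsRatCPA d fun x => -(δ * |x i|) := by
  refine ⟨{(Pi.single i δ, 0), (Pi.single i (-δ), 0)}, Finset.insert_nonempty _ _, fun x => ?_⟩
  have hpiece : ∀ c : ℚ, ⟪ratToE d (Pi.single i c), x⟫ + ((0 : ℚ) : ℝ) = c * x i := by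
    intro c
    simp [inner_ratToE, Pi.single_apply, apply_ite, ite_mul]
  rw [Finset.inf'_insert (Finset.singleton_nonempty _), Finset.inf'_singleton, hpiece, hpiece]
  push_cast
  have hδR : (0 : ℝ) ≤ δ := by exact_mod_cast hδ
  rcases le_total 0 (x i) with h | h
  · rw [abs_of_nonneg h, min_eq_right (by nlinarith)]
    ring
  · rw [abs_of_nonpos h, min_eq_left (by nlinarith)]
    ring

theorem isRatCPA_neg_mul_sum_abs_add_one (d : ℕ) {δ : ℚ} (hδ : 0 ≤ δ) :
    IsRatCPA d fun x => -(δ * (∑ i, |x i| + 1)) := by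
  convert (isRatCPA_sum Finset.univ fun i _ => isRatCPA_neg_mul_abs_apply d hδ i).add
    (isRatCPA_const d (-δ)) using 1
  funext x
  simp only [Pi.add_apply, Finset.sum_apply, Rat.cast_neg]
  rw [mul_add, mul_one, neg_add, Finset.mul_sum, ← Finset.sum_neg_distrib]

theorem exists_isRatCPA_of_forall_exists_le_add_inner {d : ℕ}
    (F err : EuclideanSpace ℝ (Fin d) → ℝ) (Q : Finset (Fin d → ℚ))
    (hQ : ∀ x, ∃ q ∈ Q, ∀ z, F z ≤ F x + err x + ⟪ratToE d q, z - x⟫) {τ : ℝ} (hτ : 0 < τ) :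
    ∃ g, IsRatCPA d g ∧ ∀ x, F x ≤ g x ∧ g x ≤ F x + err x + τ := by
  classical
  -- `G q` is the concave conjugate of `F` at `q`, a junk value unless `q ∈ Q'`
  set G : (Fin d → ℚ) → ℝ := fun q => ⨅ z, (⟪ratToE d q, z⟫ - F z)
  set Q' := Q.filter fun q => BddBelow (range fun z => ⟪ratToE d q, z⟫ - F z)
  have hQ' : ∀ x, ∃ q ∈ Q', ⟪ratToE d q, x⟫ - G q ≤ F x + err x := by
    intro x
    obtain ⟨q, hq, hmaj⟩ := hQ x
    have hlb : ∀ z, ⟪ratToE d q, x⟫ - F x - err x ≤ ⟪ratToE d q, z⟫ - F z := fun z => by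
      linarith [hmaj z, inner_sub_right (𝕜 := ℝ) (ratToE d q) z x]
    refine ⟨q, Finset.mem_filter.2 ⟨hq, _, forall_mem_range.2 hlb⟩, ?_⟩
    linarith [le_ciInf hlb]
  choose! β hβ using fun q (_ : q ∈ Q') => exists_rat_btwn (sub_lt_self (G q) hτ)
  obtain ⟨q₀, hq₀, -⟩ := hQ' 0
  have hS : (Q'.image fun q => (q, -β q)).Nonempty := ⟨_, Finset.mem_image_of_mem _ hq₀⟩
  refine ⟨_, ⟨_, hS, fun x => rfl⟩, fun x => ⟨Finset.le_inf' _ _ fun p hp => ?_, ?_⟩⟩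
  · obtain ⟨q, hq, rfl⟩ := Finset.mem_image.1 hp
    have hGq : G q ≤ ⟪ratToE d q, x⟫ - F x := ciInf_le (Finset.mem_filter.1 hq).2 x
    push_cast
    linarith [(hβ q hq).2]
  · obtain ⟨q, hq, hle⟩ := hQ' x
    refine (Finset.inf'_le _ (Finset.mem_image_of_mem _ hq)).trans ?_
    push_cast
    linarith [(hβ q hq).1]

theorem exists_isRatCPA_abs_sub_le {d : ℕ} {f : EuclideanSpace ℝ (Fin d) → ℝ}
    (hf : ConcaveOn ℝ univ f) (hfL : GloballyLipschitz d f) {ε : ℝ} (hε : 0 < ε) :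
    ∃ g, IsRatCPA d g ∧ ∀ x, |f x - g x| ≤ ε * (1 + ‖x‖) := by
  obtain ⟨C, hC, hL⟩ := hfL
  have hfc : Continuous f := (LipschitzWith.of_dist_le' (K := C) fun x y => by
    simpa [Real.dist_eq, dist_eq_norm] using hL x y).continuous
  obtain ⟨η, hη, rfl⟩ : ∃ η, 0 < η ∧ ε = 2 * η := ⟨ε / 2, half_pos hε, by ring⟩
  obtain ⟨Q, hQ⟩ :=
    (denseRange_ratToE d).exists_finset_forall_dist_lt (isCompact_closedBall 0 (C + η)) hη
  have hslopes : ∀ x, ∃ q ∈ Q, ∀ z, f z - η * ‖z‖ ≤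
      (f x - η * ‖x‖) + (η + 2 * η * ‖x‖) + ⟪ratToE d q, z - x⟫ := by
    intro x
    obtain ⟨u, hu⟩ := hf.exists_le_add_inner hfc x hη
    obtain ⟨q, hq, hqu⟩ := hQ u
      (mem_closedBall_zero_iff.2 (norm_le_of_forall_le_add_inner hC hη.le hL hu))
    exact ⟨q, hq, le_add_inner_of_norm_sub_le hu (by simpa [dist_eq_norm] using hqu.le)⟩
  obtain ⟨g, hg, hbound⟩ := exists_isRatCPA_of_forall_exists_le_add_inner
    (fun z => f z - η * ‖z‖) (fun x => η + 2 * η * ‖x‖) Q hslopes hη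
  refine ⟨g, hg, fun x => abs_le.2 ⟨?_, ?_⟩⟩ <;>
  · have := hbound x
    have : 0 ≤ η * ‖x‖ := by positivity
    linarith

theorem exists_monotone_isRatCPA_tendsto {d : ℕ} {f : EuclideanSpace ℝ (Fin d) → ℝ}
    (happrox : ∀ ε : ℝ, 0 < ε → ∃ g, IsRatCPA d g ∧ ∀ x, |f x - g x| ≤ ε * (1 + ‖x‖)) :
    ∃ g : ℕ → EuclideanSpace ℝ (Fin d) → ℝ,
      (∀ n, IsRatCPA d (g n)) ∧
      (∀ n x, g n x ≤ g (n + 1) x) ∧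
      (∀ ε : ℝ, 0 < ε → ∃ N : ℕ, ∀ n ≥ N, ∀ x, |g n x - f x| ≤ ε * (1 + ‖x‖)) := by
  choose h hh herr using fun n : ℕ => happrox ((2⁻¹ : ℝ) ^ n) (by positivity)
  set g : ℕ → EuclideanSpace ℝ (Fin d) → ℝ :=
    fun n => h n + fun x => -(((3 * 2⁻¹ ^ n : ℚ) : ℝ) * (∑ i, |x i| + 1))
  have hρ : ∀ n, (0 : ℝ) ≤ 2⁻¹ ^ n := fun n => by positivity
  have hclose : ∀ n x, |g n x - f x| ≤ 2⁻¹ ^ n * (3 * d + 4) * (1 + ‖x‖) := by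
    intro n x
    have e := abs_le.1 (herr n x)
    have hs : (2⁻¹ : ℝ) ^ n * ∑ i, |x i| ≤ 2⁻¹ ^ n * (d * ‖x‖) :=
      mul_le_mul_of_nonneg_left (EuclideanSpace.sum_abs_le x) (hρ n)
    have : 0 ≤ (2⁻¹ : ℝ) ^ n * ∑ i, |x i| := by positivity
    have : 0 ≤ (2⁻¹ : ℝ) ^ n * d := by positivity
    have : 0 ≤ (2⁻¹ : ℝ) ^ n * ‖x‖ := by positivity
    have : 0 ≤ (2⁻¹ : ℝ) ^ n * d * ‖x‖ := by positivity
    simp only [g, Pi.add_apply]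
    push_cast
    rw [abs_le]
    constructor <;> linarith [hρ n]
  refine ⟨g, fun n => (hh n).add (isRatCPA_neg_mul_sum_abs_add_one d (by positivity)),
    fun n x => ?_, fun ε hε => ?_⟩
  · have e₁ := abs_le.1 (herr n x)
    have e₂ := abs_le.1 (herr (n + 1) x)
    have hw : (2⁻¹ : ℝ) ^ n * ‖x‖ ≤ 2⁻¹ ^ n * ∑ i, |x i| :=
      mul_le_mul_of_nonneg_left (EuclideanSpace.norm_le_sum_abs x) (hρ n)
    simp only [g, Pi.add_apply, pow_succ] at e₂ ⊢
    push_cast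
    linarith
  · have hd : (0 : ℝ) < 3 * d + 4 := by positivity
    obtain ⟨N, hN⟩ := exists_pow_lt_of_lt_one (div_pos hε hd) (by norm_num : (2⁻¹ : ℝ) < 1)
    refine ⟨N, fun n hn x => (hclose n x).trans (mul_le_mul_of_nonneg_right ?_ (by positivity))⟩
    calc (2⁻¹ : ℝ) ^ n * (3 * d + 4) ≤ 2⁻¹ ^ N * (3 * d + 4) :=
          mul_le_mul_of_nonneg_right (pow_le_pow_of_le_one (by norm_num) (by norm_num) hn) hd.le
      _ ≤ ε := ((lt_div_iff₀ hd).1 hN).le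

theorem stmt_17_general (d : ℕ)
    (f : EuclideanSpace ℝ (Fin d) → ℝ)
    (hf : ConcaveOn ℝ Set.univ f) (hfL : GloballyLipschitz d f) :
    (∀ ε : ℝ, 0 < ε → ∃ g : EuclideanSpace ℝ (Fin d) → ℝ,
      IsRatCPA d g ∧ ∀ x, |f x - g x| ≤ ε * (1 + ‖x‖)) ∧
    (∃ g : ℕ → EuclideanSpace ℝ (Fin d) → ℝ,
      (∀ n, IsRatCPA d (g n)) ∧
      (∀ n x, g n x ≤ g (n + 1) x) ∧
      (∀ ε : ℝ, 0 < ε → ∃ N : ℕ, ∀ n ≥ N, ∀ x, |g n x - f x| ≤ ε * (1 + ‖x‖))) :=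
  have happrox := fun ε (hε : 0 < ε) => exists_isRatCPA_abs_sub_le hf hfL hε
  ⟨happrox, exists_monotone_isRatCPA_tendsto happrox⟩

/-- Rational concave piecewise affine functions are dense in the cone of globally Lipschitz
concave functions with respect to the G-norm, and the approximating sequence can be chosen
increasing. -/
theorem stmt_17 (d : ℕ) (hd : 1 ≤ d)
    (f : EuclideanSpace ℝ (Fin d) → ℝ)
    (hf : ConcaveOn ℝ Set.univ f) (hfL : GloballyLipschitz d f) :
    (∀ ε : ℝ, 0 < ε → ∃ g : EuclideanSpace ℝ (Fin d) → ℝ,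
      IsRatCPA d g ∧ ∀ x, |f x - g x| ≤ ε * (1 + ‖x‖)) ∧
    (∃ g : ℕ → EuclideanSpace ℝ (Fin d) → ℝ,
      (∀ n, IsRatCPA d (g n)) ∧
      (∀ n x, g n x ≤ g (n + 1) x) ∧
      (∀ ε : ℝ, 0 < ε → ∃ N : ℕ, ∀ n ≥ N, ∀ x, |g n x - f x| ≤ ε * (1 + ‖x‖))) :=
  stmt_17_general d f hf hfL
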